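/- For every integer m ≥ 2: (a) the maximum cardinality of a partial 2-spread in 𝔽_2^{2m} equals (2^{2m} − 1)/3; (b) the maximum cardinality of a partial 2-spread in 𝔽_2^{2m+1} equals (2^{2m+1} − 5)/3. -/

import Mathlib

/-- A partial `k`-spread in `𝔽_2^n`: a set of `k`-dimensional subspaces
any two distinct members of which intersect trivially. -/
def IsPartialSpread {n : ℕ} (k : ℕ)
    (S : Finset (Submodule (ZMod 2) (Fin n → ZMod 2))) : Prop :=
  (∀ U ∈ S, Module.finrank (ZMod 2) U = k) ∧
  ∀ U ∈ S, ∀ V ∈ S, U ≠ V → U ⊓ V = ⊥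

/-!
Distinct planes of a partial 2-spread share no nonzero vector and each has three of them, so
`3 |S| ≤ 2^n - 1`. For odd `n` this only gives `3 |S| ≤ 2^n - 2`, and equality is impossible: the
single uncovered nonzero vector misses some hyperplane `W`, whose `2^(n-1) - 1` nonzero vectors
(an odd number) are then partitioned among the subspaces `U ⊓ W`, each of which is nonzero and so
has an odd number of nonzero vectors; but `|S| = 2 (2^(n-1) - 1) / 3` is even.

The bounds are attained recursively. If `S` is a partial 2-spread in `V`, then in `𝔽_2^2 × V` the
planes `0 × U` (`U ∈ S`) together with the graphs of `(a, b) ↦ a • w + b • φ w` (`w ∈ V`) form one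
of size `|S| + |V|`, provided `φ` has no eigenvector: take `φ` to be multiplication by an element of
`𝔽_{2^d} \ 𝔽_2` with `d = dim V ≥ 2`. Dimensions `2` and `3` start the recursion with one plane.
-/

open Module Finset

namespace Submodule

variable {K V V' : Type*} [Field K] [AddCommGroup V] [Module K V] [AddCommGroup V'] [Module K V']

def IsPartialSpread (k : ℕ) (S : Finset (Submodule K V)) : Prop :=
  (∀ U ∈ S, finrank K U = k) ∧ (S : Set (Submodule K V)).PairwiseDisjoint id

theorem isPartialSpread_singleton {k : ℕ} {U : Submodule K V} :
    IsPartialSpread k {U} ↔ finrank K U = k := by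
  simp [IsPartialSpread]

theorem IsPartialSpread.image_map [DecidableEq (Submodule K V')] {k : ℕ}
    {S : Finset (Submodule K V)} (hS : IsPartialSpread k S) {f : V →ₗ[K] V'}
    (hf : Function.Injective f) : IsPartialSpread k (S.image (map f)) := by
  refine ⟨?_, ?_⟩
  · simp only [mem_image, forall_exists_index, and_imp, forall_apply_eq_imp_iff₂]
    intro U hU
    rw [← (equivMapOfInjective f hf U).finrank_eq, hS.1 U hU]
  · rw [coe_image]
    rintro _ ⟨U, hU, rfl⟩ _ ⟨U', hU', rfl⟩ hne
    exact disjoint_map hf (hS.2 hU hU' fun h => hne (h ▸ rfl))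

theorem card_image_map [DecidableEq (Submodule K V')] {S : Finset (Submodule K V)}
    {f : V →ₗ[K] V'} (hf : Function.Injective f) : #(S.image (map f)) = #S :=
  card_image_of_injective _ (map_injective_of_injective hf)

theorem finrank_inf_pos [FiniteDimensional K V] {U W : Submodule K V}
    (h : finrank K V < finrank K U + finrank K W) : 0 < finrank K ↥(U ⊓ W) := by
  have := finrank_sup_add_finrank_inf_eq U W
  have := (U ⊔ W).finrank_le
  omega

theorem exists_finrank_add_one_eq_of_notMem [FiniteDimensional K V] {x : V} (hx : x ≠ 0) :
    ∃ W : Submodule K V, x ∉ W ∧ finrank K W + 1 = finrank K V := by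
  obtain ⟨W, hW⟩ := (span K {x}).exists_isCompl
  refine ⟨W, fun hxW => hx ?_, ?_⟩
  · exact (disjoint_def.1 hW.disjoint) x (mem_span_singleton_self x) hxW
  · rw [← finrank_add_eq_of_isCompl hW, finrank_span_singleton hx, add_comm]

section Punctured

variable [Fintype V]

open Classical in
noncomputable def punctured (U : Submodule K V) : Finset V := {v | v ∈ U ∧ v ≠ 0}

@[simp]
theorem mem_punctured {U : Submodule K V} {v : V} : v ∈ U.punctured ↔ v ∈ U ∧ v ≠ 0 := by
  simp [punctured]

theorem card_punctured (U : Submodule K V) : #U.punctured = Nat.card U - 1 := by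
  classical
  have : U.punctured = ({v | v ∈ U} : Finset V).erase 0 := by ext; simp [and_comm]
  rw [this, card_erase_of_mem (by simp [U.zero_mem]), ← Fintype.card_subtype,
    Nat.card_eq_fintype_card]

theorem punctured_inf [DecidableEq V] (U W : Submodule K V) :
    (U ⊓ W).punctured = U.punctured ∩ W.punctured := by
  ext; simp; tauto

theorem disjoint_punctured {U W : Submodule K V} (h : Disjoint U W) :
    Disjoint U.punctured W.punctured := by
  rw [Finset.disjoint_left]
  intro v hU hW
  exact (mem_punctured.1 hU).2 ((disjoint_def.1 h) v (mem_punctured.1 hU).1 (mem_punctured.1 hW).1)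

theorem card_punctured_eq_sum_add [DecidableEq V] {S : Finset (Submodule K V)}
    (hS : (S : Set (Submodule K V)).PairwiseDisjoint id) (W : Submodule K V) :
    #W.punctured = ∑ U ∈ S, #(U ⊓ W).punctured + #(W.punctured \ S.biUnion punctured) := by
  rw [← card_inter_add_card_sdiff W.punctured (S.biUnion punctured), inter_biUnion,
    card_biUnion]
  · simp_rw [punctured_inf, inter_comm]
  · intro U hU U' hU' hne
    exact (disjoint_punctured (hS hU hU' hne)).mono inter_subset_right inter_subset_right

end Punctured

section Construction

variable (φ : V →ₗ[K] V)

def graphPlane (w : V) : Submodule K ((K × K) × V) :=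
  ((LinearMap.toSpanSingleton K V w).coprod (LinearMap.toSpanSingleton K V (φ w))).graph

variable {φ}

@[simp]
theorem mem_graphPlane {w : V} {p : (K × K) × V} :
    p ∈ graphPlane φ w ↔ p.2 = p.1.1 • w + p.1.2 • φ w := by
  simp [graphPlane]

theorem finrank_graphPlane (w : V) : finrank K (graphPlane φ w) = 2 := by
  rw [graphPlane, LinearMap.graph_eq_range_prod,
    LinearMap.finrank_range_of_inj fun _ _ h => congrArg Prod.fst h, finrank_prod, finrank_self]

theorem graphPlane_ne_bot (w : V) : graphPlane φ w ≠ ⊥ := by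
  intro h
  have := finrank_graphPlane (φ := φ) w
  rw [h, finrank_bot] at this
  exact two_ne_zero this.symm

theorem disjoint_graphPlane_map_inr (w : V) (U : Submodule K V) :
    Disjoint (graphPlane φ w) (U.map (LinearMap.inr K (K × K) V)) := by
  rw [disjoint_def]
  rintro ⟨u, v⟩ hw ⟨v', -, hv'⟩
  simp only [LinearMap.inr_apply, Prod.mk.injEq] at hv'
  obtain ⟨rfl, rfl⟩ := hv'
  simp_all

theorem eq_zero_of_smul_add_smul_eq_zero (hφ : ∀ (c : K) (w : V), φ w = c • w → w = 0)
    {a b : K} {w : V} (h : a • w + b • φ w = 0) : (a = 0 ∧ b = 0) ∨ w = 0 := by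
  by_cases hb : b = 0
  · simp_all [smul_eq_zero]
  · refine Or.inr (hφ (-(b⁻¹ * a)) w ?_)
    rw [add_eq_zero_iff_neg_eq] at h
    rw [← inv_smul_smul₀ hb (φ w), ← h, smul_neg, smul_smul, neg_smul]

theorem disjoint_graphPlane (hφ : ∀ (c : K) (w : V), φ w = c • w → w = 0) {w w' : V}
    (h : w ≠ w') : Disjoint (graphPlane φ w) (graphPlane φ w') := by
  rw [disjoint_def]
  rintro ⟨⟨a, b⟩, v⟩ hw hw'
  rw [mem_graphPlane] at hw hw'
  have : a • (w - w') + b • φ (w - w') = 0 := by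
    rw [map_sub, smul_sub, smul_sub, sub_add_sub_comm, ← hw, ← hw', sub_self]
  rcases eq_zero_of_smul_add_smul_eq_zero hφ this with ⟨rfl, rfl⟩ | h0
  · simp_all
  · exact absurd (sub_eq_zero.1 h0) h

theorem graphPlane_injective (hφ : ∀ (c : K) (w : V), φ w = c • w → w = 0) :
    Function.Injective (graphPlane φ) := by
  intro w w' h
  by_contra hne
  have := disjoint_graphPlane hφ hne
  rw [h, disjoint_self] at this
  exact graphPlane_ne_bot w' this

theorem IsPartialSpread.exists_prod [Fintype V] (hφ : ∀ (c : K) (w : V), φ w = c • w → w = 0)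
    {S : Finset (Submodule K V)} (hS : IsPartialSpread 2 S) :
    ∃ T : Finset (Submodule K ((K × K) × V)), IsPartialSpread 2 T ∧ #T = #S + Fintype.card V := by
  classical
  have hinr : Function.Injective (LinearMap.inr K (K × K) V) := LinearMap.inr_injective
  have hS' := hS.image_map hinr
  refine ⟨S.image (map (LinearMap.inr K (K × K) V)) ∪ univ.image (graphPlane φ), ⟨?_, ?_⟩, ?_⟩
  · simp only [mem_union, mem_image, mem_univ, true_and]
    rintro _ (⟨U, hU, rfl⟩ | ⟨w, rfl⟩)
    · exact hS'.1 _ (mem_image_of_mem _ hU)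
    · exact finrank_graphPlane w
  · rw [coe_union]
    refine hS'.2.union ?_ ?_
    · simp only [coe_image, coe_univ, Set.image_univ]
      rintro _ ⟨w, rfl⟩ _ ⟨w', rfl⟩ hne
      exact disjoint_graphPlane hφ fun h => hne (h ▸ rfl)
    · simp only [coe_image, coe_univ, Set.image_univ, Set.mem_image, Set.mem_range, mem_coe]
      rintro _ ⟨U, -, rfl⟩ _ ⟨w, rfl⟩ -
      exact (disjoint_graphPlane_map_inr w U).symm
  · rw [card_union_of_disjoint, card_image_map hinr,
      card_image_of_injective _ (graphPlane_injective hφ), card_univ]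
    rw [disjoint_right]
    rintro _ hG hU
    obtain ⟨w, -, rfl⟩ := mem_image.1 hG
    obtain ⟨U, -, hU⟩ := mem_image.1 hU
    have := disjoint_graphPlane_map_inr (φ := φ) w U
    rw [hU, disjoint_self] at this
    exact graphPlane_ne_bot w this

end Construction

theorem exists_forall_apply_eq_smul_imp_eq_zero (L : Type*) [Field L] [Algebra K L]
    [FiniteDimensional K L] [FiniteDimensional K V] (hL : 2 ≤ finrank K L)
    (hV : finrank K V = finrank K L) :
    ∃ φ : V →ₗ[K] V, ∀ (c : K) (w : V), φ w = c • w → w = 0 := by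
  obtain ⟨x, hx⟩ : ∃ x : L, x ∉ (⊥ : Subalgebra K L) := by
    by_contra! h
    have := Subalgebra.bot_eq_top_iff_finrank_eq_one.1 (eq_top_iff.2 fun x _ => h x)
    omega
  let e : V ≃ₗ[K] L := LinearEquiv.ofFinrankEq _ _ hV
  refine ⟨e.symm.toLinearMap ∘ₗ LinearMap.mulLeft K x ∘ₗ e.toLinearMap, fun c w hw => ?_⟩
  have hxc : x - algebraMap K L c ≠ 0 :=
    fun h => hx (sub_eq_zero.1 h ▸ Subalgebra.algebraMap_mem _ c)
  have : (x - algebraMap K L c) * e w = 0 := by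
    have := congrArg e hw
    simp only [LinearMap.comp_apply, LinearEquiv.coe_coe, LinearMap.mulLeft_apply,
      LinearEquiv.apply_symm_apply, map_smul, Algebra.smul_def] at this
    rw [sub_mul, this, sub_self]
  simpa using (mul_eq_zero.1 this).resolve_left hxc

end Submodule

namespace Submodule

variable {V : Type*} [AddCommGroup V] [Module (ZMod 2) V] [Fintype V]

theorem card_punctured_eq_two_pow (U : Submodule (ZMod 2) V) :
    #U.punctured = 2 ^ finrank (ZMod 2) U - 1 := by
  rw [card_punctured, natCard_eq_pow_finrank (K := ZMod 2), Nat.card_zmod]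

theorem odd_card_punctured {U : Submodule (ZMod 2) V} (hU : 0 < finrank (ZMod 2) U) :
    Odd #U.punctured := by
  rw [card_punctured_eq_two_pow]
  exact Nat.Even.sub_odd Nat.one_le_two_pow (Nat.even_pow.2 ⟨even_two, hU.ne'⟩) odd_one

theorem IsPartialSpread.three_mul_card_add_card_sdiff [DecidableEq V]
    {S : Finset (Submodule (ZMod 2) V)} (hS : IsPartialSpread 2 S) :
    3 * #S + #((⊤ : Submodule (ZMod 2) V).punctured \ S.biUnion punctured) =
      2 ^ finrank (ZMod 2) V - 1 := by
  rw [← finrank_top (ZMod 2) V, ← card_punctured_eq_two_pow, card_punctured_eq_sum_add hS.2,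
    sum_congr rfl fun U hU => by rw [inf_top_eq, card_punctured_eq_two_pow, hS.1 U hU],
    sum_const, smul_eq_mul]
  omega

theorem IsPartialSpread.three_mul_card_lt {S : Finset (Submodule (ZMod 2) V)}
    (hS : IsPartialSpread 2 S) : 3 * #S < 2 ^ finrank (ZMod 2) V := by
  classical
  have := hS.three_mul_card_add_card_sdiff
  have := Nat.one_le_two_pow (n := finrank (ZMod 2) V)
  omega

theorem IsPartialSpread.three_mul_card_add_two_ne {S : Finset (Submodule (ZMod 2) V)}
    (hS : IsPartialSpread 2 S) (hV : 2 ≤ finrank (ZMod 2) V) :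
    3 * #S + 2 ≠ 2 ^ finrank (ZMod 2) V := by
  classical
  intro hcard
  obtain ⟨x, hx⟩ : ∃ x, (⊤ : Submodule (ZMod 2) V).punctured \ S.biUnion punctured = {x} :=
    card_eq_one.1 (by have := hS.three_mul_card_add_card_sdiff; omega)
  have hx0 : x ≠ 0 := (mem_punctured.1 (mem_sdiff.1 (hx ▸ mem_singleton_self x)).1).2
  obtain ⟨W, hxW, hW⟩ := exists_finrank_add_one_eq_of_notMem (K := ZMod 2) hx0
  have hW_covered : W.punctured \ S.biUnion punctured = ∅ := by
    refine eq_empty_of_forall_notMem fun v hv => ?_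
    have hv' : v ∈ (⊤ : Submodule (ZMod 2) V).punctured \ S.biUnion punctured := by
      simp only [mem_sdiff, mem_punctured, mem_top, true_and] at hv ⊢
      exact ⟨hv.1.2, hv.2⟩
    rw [hx, mem_singleton] at hv'
    exact hxW (hv' ▸ (mem_punctured.1 (mem_sdiff.1 hv).1).1)
  have hsum := card_punctured_eq_sum_add hS.2 W
  rw [hW_covered, card_empty, add_zero] at hsum
  have hodd_sum : Odd #W.punctured ↔ Odd #S := by
    rw [hsum, odd_sum_iff_odd_card_odd, filter_true_of_mem fun U hU =>
      odd_card_punctured (finrank_inf_pos (by rw [hS.1 U hU]; omega))]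
  have hW_odd : Odd #W.punctured := odd_card_punctured (by omega)
  have hS_even : Even #S := by
    rw [← hW, pow_succ] at hcard
    rw [Nat.even_iff]
    omega
  exact (Nat.not_odd_iff_even.2 hS_even) (hodd_sum.1 hW_odd)

end Submodule

theorem exists_isPartialSpread_fin_add_two {d : ℕ} (hd : 2 ≤ d)
    {S : Finset (Submodule (ZMod 2) (Fin d → ZMod 2))} (hS : Submodule.IsPartialSpread 2 S) :
    ∃ T : Finset (Submodule (ZMod 2) (Fin (d + 2) → ZMod 2)),
      Submodule.IsPartialSpread 2 T ∧ #T = #S + 2 ^ d := by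
  classical
  have hL : finrank (ZMod 2) (GaloisField 2 d) = d := GaloisField.finrank 2 (by omega)
  obtain ⟨φ, hφ⟩ := Submodule.exists_forall_apply_eq_smul_imp_eq_zero (K := ZMod 2)
    (V := Fin d → ZMod 2) (GaloisField 2 d) (by omega) (by rw [hL, finrank_fin_fun])
  obtain ⟨T, hT, hT_card⟩ := hS.exists_prod hφ
  let e : ((ZMod 2 × ZMod 2) × (Fin d → ZMod 2)) ≃ₗ[ZMod 2] (Fin (d + 2) → ZMod 2) :=
    LinearEquiv.ofFinrankEq _ _ (by simp only [finrank_prod, finrank_self, finrank_fin_fun]; omega)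
  refine ⟨T.image (Submodule.map e.toLinearMap), hT.image_map e.injective, ?_⟩
  rw [Submodule.card_image_map e.injective, hT_card]
  simp [ZMod.card]

theorem exists_isPartialSpread_fin_two_mul {m : ℕ} (hm : 1 ≤ m) :
    ∃ S : Finset (Submodule (ZMod 2) (Fin (2 * m) → ZMod 2)),
      Submodule.IsPartialSpread 2 S ∧ 3 * #S + 1 = 2 ^ (2 * m) := by
  induction m, hm using Nat.le_induction with
  | base => exact ⟨{⊤}, Submodule.isPartialSpread_singleton.2 (by simp), by simp⟩
  | succ m hm ih =>
    obtain ⟨S, hS, hS_card⟩ := ih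
    obtain ⟨T, hT, hT_card⟩ := exists_isPartialSpread_fin_add_two (by omega) hS
    refine ⟨T, hT, ?_⟩
    have : 2 ^ (2 * (m + 1)) = 4 * 2 ^ (2 * m) := by ring
    omega

theorem exists_isPartialSpread_fin_two_mul_add_one {m : ℕ} (hm : 1 ≤ m) :
    ∃ S : Finset (Submodule (ZMod 2) (Fin (2 * m + 1) → ZMod 2)),
      Submodule.IsPartialSpread 2 S ∧ 3 * #S + 5 = 2 ^ (2 * m + 1) := by
  induction m, hm using Nat.le_induction with
  | base =>
    obtain ⟨W, -, hW⟩ := Submodule.exists_finrank_add_one_eq_of_notMem (K := ZMod 2)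
      (x := fun _ : Fin (2 * 1 + 1) => (1 : ZMod 2)) fun h => one_ne_zero (congrFun h 0)
    rw [finrank_fin_fun] at hW
    exact ⟨{W}, Submodule.isPartialSpread_singleton.2 (by omega), by simp⟩
  | succ m hm ih =>
    obtain ⟨S, hS, hS_card⟩ := ih
    obtain ⟨T, hT, hT_card⟩ := exists_isPartialSpread_fin_add_two (by omega) hS
    refine ⟨T, hT, ?_⟩
    have : 2 ^ (2 * (m + 1) + 1) = 4 * 2 ^ (2 * m + 1) := by ring
    omega

theorem isPartialSpread_iff {n k : ℕ} {S : Finset (Submodule (ZMod 2) (Fin n → ZMod 2))} :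
    IsPartialSpread k S ↔ Submodule.IsPartialSpread k S :=
  and_congr_right' <| by
    simp only [Set.PairwiseDisjoint, Set.Pairwise, mem_coe, Function.onFun, id, disjoint_iff]

/-- Maximum sizes of partial `2`-spreads in `𝔽_2^{2m}` and `𝔽_2^{2m+1}`. -/
theorem partial_two_spread_max (m : ℕ) (hm : 2 ≤ m) :
    IsGreatest {c : ℕ | ∃ S : Finset (Submodule (ZMod 2) (Fin (2 * m) → ZMod 2)),
        IsPartialSpread 2 S ∧ S.card = c} ((2 ^ (2 * m) - 1) / 3) ∧
    IsGreatest {c : ℕ | ∃ S : Finset (Submodule (ZMod 2) (Fin (2 * m + 1) → ZMod 2)),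
        IsPartialSpread 2 S ∧ S.card = c} ((2 ^ (2 * m + 1) - 5) / 3) := by
  obtain ⟨S, hS, hS_card⟩ := exists_isPartialSpread_fin_two_mul (m := m) (by omega)
  obtain ⟨T, hT, hT_card⟩ := exists_isPartialSpread_fin_two_mul_add_one (m := m) (by omega)
  refine ⟨⟨⟨S, isPartialSpread_iff.2 hS, by omega⟩, ?_⟩,
    ⟨⟨T, isPartialSpread_iff.2 hT, by omega⟩, ?_⟩⟩
  · rintro _ ⟨S', hS', rfl⟩
    have hlt := (isPartialSpread_iff.1 hS').three_mul_card_lt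
    rw [finrank_fin_fun] at hlt
    omega
  · rintro _ ⟨T', hT', rfl⟩
    have hlt := (isPartialSpread_iff.1 hT').three_mul_card_lt
    have hne :=
      (isPartialSpread_iff.1 hT').three_mul_card_add_two_ne (by rw [finrank_fin_fun]; omega)
    rw [finrank_fin_fun] at hlt hne
    omega
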